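/- arXiv:0911.2325 — 2 statements merged into one kernel-verified Lean document; each statement's English description precedes it below -/
import Mathlib

section
/- The function m(k,n) = 3·2^k + n is a modulus of continuity for f on [0, 2^k]: for all k, n ∈ ℕ and all x, y ∈ [0, 2^k], if |x − y| ≤ 2^{-(3·2^k + n)} then |f(x) − f(y)| ≤ 2^{-n}. -/
/-- A real number is a dyadic rational if it has the form `m / 2^n`. -/
def IsDyadic (x : ℝ) : Prop := ∃ (m : ℤ) (n : ℕ), x = (m : ℝ) / 2 ^ n

/-- `eps a = Σ_{i=1}^{a} 4^{-i} = (1 - 4^{-a})/3`. -/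
noncomputable def eps (a : ℕ) : ℝ := (1 - ((4 : ℝ)⁻¹) ^ a) / 3

/-- The increasing breakpoints `d_j^r = r + ε_j`. -/
noncomputable def dpt (r j : ℕ) : ℝ := (r : ℝ) + eps j

/-- The decreasing breakpoints `e_j^r = r + 2ε_r − ε_j`. -/
noncomputable def ept (r j : ℕ) : ℝ := (r : ℝ) + 2 * eps r - eps j

/-- Affine interpolation on `[a,b]` with values `fa` at `a` and `fb` at `b`. -/
noncomputable def interp (a b fa fb x : ℝ) : ℝ := fa + (x - a) * (fb - fa) / (b - a)

/-- The specification of the function `f` of the paper: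
on each interval `[r, r+1]`, `f(d_0^r) = 0`, `f(d_j^r) = f(e_j^r) = 2^j` for `1 ≤ j ≤ r`,
`f = 0` on `[e_0^r, r+1]`, and `f` is affine between consecutive breakpoints. -/
def SpecF (f : ℝ → ℝ) : Prop :=
  ∀ r : ℕ,
    f (dpt r 0) = 0 ∧
    (∀ j : ℕ, 1 ≤ j → j ≤ r → f (dpt r j) = 2 ^ j ∧ f (ept r j) = 2 ^ j) ∧
    (∀ x ∈ Set.Icc (ept r 0) ((r : ℝ) + 1), f x = 0) ∧
    (∀ j : ℕ, j < r → ∀ x ∈ Set.Icc (dpt r j) (dpt r (j + 1)),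
      f x = interp (dpt r j) (dpt r (j + 1)) (f (dpt r j)) (f (dpt r (j + 1))) x) ∧
    (∀ j : ℕ, j < r → ∀ x ∈ Set.Icc (ept r (j + 1)) (ept r j),
      f x = interp (ept r (j + 1)) (ept r j) (f (ept r (j + 1))) (f (ept r j)) x)

lemma eps_zero : eps 0 = 0 := by simp [eps]

lemma eps_succ (j : ℕ) : eps (j+1) = eps j + ((4:ℝ)⁻¹) ^ (j+1) := by
  simp only [eps, pow_succ]
  field_simp
  ring

lemma eps_mono {i j : ℕ} (h : i ≤ j) : eps i ≤ eps j := by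
  have : ((4:ℝ)⁻¹) ^ j ≤ ((4:ℝ)⁻¹) ^ i :=
    pow_le_pow_of_le_one (by norm_num) (by norm_num) h
  simp only [eps]
  linarith

lemma eps_nonneg (j : ℕ) : 0 ≤ eps j := eps_zero ▸ eps_mono (Nat.zero_le j)

lemma eps_lt_third (j : ℕ) : eps j < 1/3 := by
  have : (0:ℝ) < ((4:ℝ)⁻¹) ^ j := by positivity
  simp only [eps]; linarith

-- glue lemma
lemma lip_glue {f : ℝ → ℝ} {a b c C : ℝ} (hab : a ≤ b) (hbc : b ≤ c)
    (h1 : ∀ x ∈ Set.Icc a b, ∀ y ∈ Set.Icc a b, |f x - f y| ≤ C * |x - y|)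
    (h2 : ∀ x ∈ Set.Icc b c, ∀ y ∈ Set.Icc b c, |f x - f y| ≤ C * |x - y|) :
    ∀ x ∈ Set.Icc a c, ∀ y ∈ Set.Icc a c, |f x - f y| ≤ C * |x - y| := by
  have key : ∀ x ∈ Set.Icc a c, ∀ y ∈ Set.Icc a c, x ≤ y → |f x - f y| ≤ C * |x - y| := by
    intro x hx y hy hxy
    by_cases hyb : y ≤ b
    · exact h1 x ⟨hx.1, hxy.trans hyb⟩ y ⟨hy.1, hyb⟩
    · push_neg at hyb
      by_cases hxb : b ≤ x
      · exact h2 x ⟨hxb, hx.2⟩ y ⟨hyb.le, hy.2⟩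
      · push_neg at hxb
        have h1' := h1 x ⟨hx.1, hxb.le⟩ b ⟨hab, le_refl b⟩
        have h2' := h2 b ⟨le_refl b, hbc⟩ y ⟨hyb.le, hy.2⟩
        have e1 : |x - b| = b - x := by rw [abs_of_nonpos (by linarith)]; ring
        have e2 : |b - y| = y - b := by rw [abs_of_nonpos (by linarith)]; ring
        have e3 : |x - y| = y - x := by rw [abs_of_nonpos (by linarith)]; ring
        calc |f x - f y| ≤ |f x - f b| + |f b - f y| := abs_sub_le _ _ _
          _ ≤ C * |x - b| + C * |b - y| := add_le_add h1' h2'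
          _ = C * |x - y| := by rw [e1, e2, e3]; ring
  intro x hx y hy
  rcases le_total x y with h | h
  · exact key x hx y hy h
  · rw [abs_sub_comm (f x), abs_sub_comm x]
    exact key y hy x hx h

lemma affine_lip {f : ℝ → ℝ} {a b C : ℝ} (hab : a < b)
    (hC : |f b - f a| ≤ C * (b - a))
    (hf : ∀ x ∈ Set.Icc a b, f x = interp a b (f a) (f b) x) :
    ∀ x ∈ Set.Icc a b, ∀ y ∈ Set.Icc a b, |f x - f y| ≤ C * |x - y| := by
  intro x hx y hy
  rw [hf x hx, hf y hy]
  have hba : (0:ℝ) < b - a := by linarith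
  have hdiff : interp a b (f a) (f b) x - interp a b (f a) (f b) y
      = (x - y) * (f b - f a) / (b - a) := by
    simp only [interp]; ring
  rw [hdiff, abs_div, abs_mul, abs_of_pos hba, div_le_iff₀ hba]
  calc |x - y| * |f b - f a| ≤ |x - y| * (C * (b - a)) :=
        mul_le_mul_of_nonneg_left hC (abs_nonneg _)
    _ = C * |x - y| * (b - a) := by ring

-- slope bound: 2^(j+1) ≤ 2^(3r) * (1/4)^(j+1) when j < r
lemma slope_bound {j r : ℕ} (h : j < r) :
    (2:ℝ)^(j+1) ≤ (2:ℝ)^(3*r) * ((4:ℝ)⁻¹) ^ (j+1) := by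
  have h4 : ((4:ℝ))^(j+1) ≠ 0 := by positivity
  rw [inv_pow, ← div_eq_mul_inv, le_div_iff₀ (by positivity)]
  have e1 : (2:ℝ)^(j+1) * (4:ℝ)^(j+1) = 2^(3*(j+1)) := by
    rw [show (4:ℝ) = 2^2 by norm_num, ← pow_mul, ← pow_add]
    congr 1; ring
  rw [e1]
  exact pow_le_pow_right₀ one_le_two (by omega)

lemma interval_lip {f : ℝ → ℝ} (hf : SpecF f) (r : ℕ) :
    ∀ x ∈ Set.Icc (r:ℝ) ((r:ℝ)+1), ∀ y ∈ Set.Icc (r:ℝ) ((r:ℝ)+1),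
      |f x - f y| ≤ (2:ℝ)^(3*r) * |x - y| := by
  obtain ⟨h0, hval, hzero, hd, he⟩ := hf r
  set C : ℝ := (2:ℝ)^(3*r) with hCdef
  have hC0 : (0:ℝ) ≤ C := by positivity
  -- value of f at dpt r j, lower/upper bounds
  have fd_bounds : ∀ j : ℕ, j ≤ r → 0 ≤ f (dpt r j) ∧ f (dpt r j) ≤ 2^j := by
    intro j hj
    rcases Nat.eq_zero_or_pos j with rfl | hj1
    · rw [h0]; norm_num
    · rw [(hval j hj1 hj).1]; exact ⟨by positivity, le_rfl⟩
  have fe_bounds : ∀ j : ℕ, j ≤ r → 0 ≤ f (ept r j) ∧ f (ept r j) ≤ 2^j := by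
    intro j hj
    rcases Nat.eq_zero_or_pos j with rfl | hj1
    · have : f (ept r 0) = 0 := by
        apply hzero
        constructor
        · exact le_refl _
        · have := eps_lt_third r
          simp only [ept, eps_zero]; linarith
      rw [this]; norm_num
    · rw [(hval j hj1 hj).2]; exact ⟨by positivity, le_rfl⟩
  -- Lipschitz on each d-segment
  have dseg_lip : ∀ j : ℕ, j < r →
      ∀ x ∈ Set.Icc (dpt r j) (dpt r (j+1)), ∀ y ∈ Set.Icc (dpt r j) (dpt r (j+1)),
        |f x - f y| ≤ C * |x - y| := by
    intro j hj
    have hab : dpt r j < dpt r (j+1) := by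
      simp only [dpt, eps_succ j]
      have : (0:ℝ) < ((4:ℝ)⁻¹)^(j+1) := by positivity
      linarith
    have hlen : dpt r (j+1) - dpt r j = ((4:ℝ)⁻¹)^(j+1) := by
      simp only [dpt, eps_succ j]; ring
    apply affine_lip hab _ (hd j hj)
    rw [hlen]
    have hb := fd_bounds (j+1) (by omega)
    have ha := fd_bounds j (by omega)
    have h2 : (2:ℝ)^j ≤ 2^(j+1) := by
      apply pow_le_pow_right₀ one_le_two; omega
    have : |f (dpt r (j+1)) - f (dpt r j)| ≤ 2^(j+1) := by
      rw [abs_le]; constructor <;> nlinarith [hb.1, hb.2, ha.1, ha.2]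
    exact this.trans (slope_bound hj)
  -- Lipschitz on each e-segment
  have eseg_lip : ∀ j : ℕ, j < r →
      ∀ x ∈ Set.Icc (ept r (j+1)) (ept r j), ∀ y ∈ Set.Icc (ept r (j+1)) (ept r j),
        |f x - f y| ≤ C * |x - y| := by
    intro j hj
    have hab : ept r (j+1) < ept r j := by
      simp only [ept, eps_succ j]
      have : (0:ℝ) < ((4:ℝ)⁻¹)^(j+1) := by positivity
      linarith
    have hlen : ept r j - ept r (j+1) = ((4:ℝ)⁻¹)^(j+1) := by
      simp only [ept, eps_succ j]; ring
    apply affine_lip hab _ (he j hj)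
    rw [hlen]
    have hb := fe_bounds j (by omega)
    have ha := fe_bounds (j+1) (by omega)
    have h2 : (2:ℝ)^j ≤ 2^(j+1) := by
      apply pow_le_pow_right₀ one_le_two; omega
    have : |f (ept r j) - f (ept r (j+1))| ≤ 2^(j+1) := by
      rw [abs_le]; constructor <;> nlinarith [hb.1, hb.2, ha.1, ha.2]
    exact this.trans (slope_bound hj)
  -- induction: Lipschitz on [d_0, d_j]
  have dpart : ∀ j : ℕ, j ≤ r →
      ∀ x ∈ Set.Icc (dpt r 0) (dpt r j), ∀ y ∈ Set.Icc (dpt r 0) (dpt r j),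
        |f x - f y| ≤ C * |x - y| := by
    intro j
    induction j with
    | zero =>
      intro _ x hx y hy
      have : x = y := by
        have := hx.1; have := hx.2; have := hy.1; have := hy.2
        linarith
      simp [this]
    | succ j ih =>
      intro hj
      exact lip_glue (by simp only [dpt]; have := eps_mono (Nat.zero_le j); linarith)
        (by simp only [dpt]; have := eps_mono (Nat.le_succ j); linarith)
        (ih (by omega)) (dseg_lip j (by omega))
  -- induction: Lipschitz on [e_j, e_0]
  have epart : ∀ j : ℕ, j ≤ r →
      ∀ x ∈ Set.Icc (ept r j) (ept r 0), ∀ y ∈ Set.Icc (ept r j) (ept r 0),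
        |f x - f y| ≤ C * |x - y| := by
    intro j
    induction j with
    | zero =>
      intro _ x hx y hy
      have : x = y := by
        have := hx.1; have := hx.2; have := hy.1; have := hy.2
        linarith
      simp [this]
    | succ j ih =>
      intro hj
      exact lip_glue
        (by simp only [ept]; have := eps_mono (Nat.le_succ j); linarith)
        (by simp only [ept]; have := eps_mono (Nat.zero_le j); linarith)
        (eseg_lip j (by omega)) (ih (by omega))
  -- combine
  have hde : dpt r r = ept r r := by simp only [dpt, ept]; ring
  have main : ∀ x ∈ Set.Icc (dpt r 0) (ept r 0), ∀ y ∈ Set.Icc (dpt r 0) (ept r 0),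
      |f x - f y| ≤ C * |x - y| := by
    have g1 : dpt r 0 ≤ dpt r r := by
      simp only [dpt, eps_zero]
      have := eps_nonneg r; linarith
    have g2 : dpt r r ≤ ept r 0 := by
      simp only [dpt, ept, eps_zero]
      have := eps_nonneg r; linarith
    have h2' : ∀ x ∈ Set.Icc (dpt r r) (ept r 0), ∀ y ∈ Set.Icc (dpt r r) (ept r 0),
        |f x - f y| ≤ C * |x - y| := by
      rw [hde]; exact epart r le_rfl
    exact lip_glue g1 g2 (dpart r le_rfl) h2'
  have zeroseg : ∀ x ∈ Set.Icc (ept r 0) ((r:ℝ)+1), ∀ y ∈ Set.Icc (ept r 0) ((r:ℝ)+1),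
      |f x - f y| ≤ C * |x - y| := by
    intro x hx y hy
    rw [hzero x hx, hzero y hy]
    simpa using mul_nonneg hC0 (abs_nonneg (x - y))
  have hd0 : dpt r 0 = (r:ℝ) := by simp [dpt, eps_zero]
  have hde0 : dpt r 0 ≤ ept r 0 := by
    simp only [dpt, ept, eps_zero]
    have := eps_nonneg r; linarith
  have he0 : ept r 0 ≤ (r:ℝ) + 1 := by
    simp only [ept, eps_zero]
    have := eps_lt_third r; linarith
  have final := lip_glue hde0 he0 main zeroseg
  rw [hd0] at final
  exact final

lemma lip_weaken {f : ℝ → ℝ} {s : Set ℝ} {C C' : ℝ} (h : C ≤ C')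
    (hb : ∀ x ∈ s, ∀ y ∈ s, |f x - f y| ≤ C * |x - y|) :
    ∀ x ∈ s, ∀ y ∈ s, |f x - f y| ≤ C' * |x - y| := fun x hx y hy =>
  (hb x hx y hy).trans (mul_le_mul_of_nonneg_right h (abs_nonneg _))

lemma global_lip {f : ℝ → ℝ} (hf : SpecF f) (R : ℕ) :
    ∀ x ∈ Set.Icc (0:ℝ) (R:ℝ), ∀ y ∈ Set.Icc (0:ℝ) (R:ℝ),
      |f x - f y| ≤ (2:ℝ)^(3*R) * |x - y| := by
  induction R with
  | zero =>
    intro x hx y hy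
    have : x = y := by
      have := hx.1; have := hx.2; have := hy.1; have := hy.2
      simp only [Nat.cast_zero] at *
      linarith
    simp [this]
  | succ R ih =>
    have hle : (2:ℝ)^(3*R) ≤ (2:ℝ)^(3*(R+1)) :=
      pow_le_pow_right₀ one_le_two (by omega)
    have h1 := lip_weaken hle ih
    have h2 := lip_weaken hle (interval_lip hf R)
    have := lip_glue (by positivity : (0:ℝ) ≤ (R:ℝ))
      (by linarith : (R:ℝ) ≤ (R:ℝ)+1) h1 h2
    intro x hx y hy
    have hcast : ((R:ℝ)+1) = ((R+1 : ℕ):ℝ) := by push_cast; ring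
    rw [hcast] at this
    exact this x hx y hy

/-- `m(k,n) = 3·2^k + n` is a modulus of continuity for `f` on `[0, 2^k]`. -/
theorem statement2 (f : ℝ → ℝ) (hf : SpecF f) :
    ∀ k n : ℕ, ∀ x ∈ Set.Icc (0 : ℝ) (2 ^ k), ∀ y ∈ Set.Icc (0 : ℝ) (2 ^ k),
      |x - y| ≤ (2 : ℝ) ^ (-(3 * 2 ^ k + n : ℤ)) → |f x - f y| ≤ (2 : ℝ) ^ (-(n : ℤ)) := by
  intro k n x hx y hy hxy
  have hcast : ((2:ℝ) ^ k) = ((2^k : ℕ) : ℝ) := by push_cast; ring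
  rw [hcast] at hx hy
  have h1 := global_lip hf (2^k) x hx y hy
  have h2 : (2:ℝ)^(3*2^k) * |x - y| ≤ (2:ℝ)^(3*2^k) * (2:ℝ)^(-(3 * 2 ^ k + n : ℤ)) :=
    mul_le_mul_of_nonneg_left hxy (by positivity)
  have h3 : (2:ℝ)^(3*2^k) * (2:ℝ)^(-(3 * 2 ^ k + n : ℤ)) = (2:ℝ)^(-(n:ℤ)) := by
    rw [show ((2:ℝ)^(3*2^k : ℕ)) = (2:ℝ)^((3*2^k : ℕ) : ℤ) from (zpow_natCast 2 _).symm,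
      ← zpow_add₀ (two_ne_zero)]
    congr 1
    push_cast
    ring
  linarith
end

section
/- The function F is well defined, continuous on [0,∞), and maps every dyadic rational in [0,∞) to a dyadic rational. -/
/-- `kmin j = min { i : j + 1/2 < 2^i }`. -/
noncomputable def kmin (j : ℕ) : ℕ := sInf {i : ℕ | (j : ℝ) + 1 / 2 < 2 ^ i}

/-- The specification of the function `F` of the paper: `F(j) = 0` for every `j ∈ ℕ`,
`F(j + 1/2) = 1/2 + 2^{-2^{k(j)}}`, and `F` is affine on each of `[j, j + 1/2]` and
`[j + 1/2, j + 1]`. -/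
def SpecFF (F : ℝ → ℝ) : Prop :=
  (∀ j : ℕ, F (j : ℝ) = 0) ∧
  (∀ j : ℕ, F ((j : ℝ) + 1 / 2) = 1 / 2 + (2 : ℝ) ^ (-(2 ^ kmin j : ℤ))) ∧
  (∀ j : ℕ, ∀ x ∈ Set.Icc (j : ℝ) ((j : ℝ) + 1 / 2),
    F x = interp (j : ℝ) ((j : ℝ) + 1 / 2) (F (j : ℝ)) (F ((j : ℝ) + 1 / 2)) x) ∧
  (∀ j : ℕ, ∀ x ∈ Set.Icc ((j : ℝ) + 1 / 2) ((j : ℝ) + 1),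
    F x = interp ((j : ℝ) + 1 / 2) ((j : ℝ) + 1) (F ((j : ℝ) + 1 / 2)) (F ((j : ℝ) + 1)) x)

/-!
Write `F x = h ⌊x⌋ · τ (fract x)`, where `τ t = 2 min(t, 1 - t)` is the tent on `[0, 1]`
and `h j = 1/2 + 2^{-2^{k(j)}}` is the height of the `j`-th tent. The jumps of `⌊x⌋` at the
integers are harmless because `τ` vanishes at both ends of `[0, 1]`, so `F` is continuous.
Dyadic rationals form a subring of `ℝ` containing every `2^n`, `n ∈ ℤ`, and `τ` preserves
them (`min` picks one of its arguments), so `F` maps dyadics to dyadics. Any function meeting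
the specification is pinned down on each half-interval by its values at `j`, `j + 1/2`,
`j + 1`, whence uniqueness.
-/

open Set

section MulCompFract

variable {M : Type*} [MulZeroClass M]

theorem locallyFinite_Icc_intCast_add_one :
    LocallyFinite fun m : ℤ => Icc (m : ℝ) (m + 1) := by
  intro x
  refine ⟨Ioo (x - 1) (x + 1), Ioo_mem_nhds (by linarith) (by linarith),
    (finite_Icc (⌊x⌋ - 2) (⌊x⌋ + 2)).subset ?_⟩
  rintro m ⟨y, ⟨hmy, hym⟩, hxy, hyx⟩
  have := Int.floor_le x
  have := Int.lt_floor_add_one x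
  constructor
  · exact_mod_cast (show (⌊x⌋ : ℝ) - 2 ≤ m by linarith)
  · exact_mod_cast (show (m : ℝ) ≤ ⌊x⌋ + 2 by linarith)

theorem mul_comp_fract_eq_of_mem_Icc (h : ℤ → M) {g : ℝ → M} (hg₀ : g 0 = 0) (hg₁ : g 1 = 0)
    {m : ℤ} {x : ℝ} (hx : x ∈ Icc (m : ℝ) (m + 1)) :
    h ⌊x⌋ * g (Int.fract x) = h m * g (x - m) := by
  rcases hx.2.eq_or_lt with rfl | hlt
  · simp [hg₀, hg₁]
  · have hfloor : ⌊x⌋ = m := Int.floor_eq_iff.2 ⟨hx.1, hlt⟩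
    rw [Int.fract, hfloor]

theorem continuous_mul_comp_fract [TopologicalSpace M] [ContinuousMul M] (h : ℤ → M) {g : ℝ → M}
    (hg : ContinuousOn g (Icc 0 1)) (hg₀ : g 0 = 0) (hg₁ : g 1 = 0) :
    Continuous fun x => h ⌊x⌋ * g (Int.fract x) := by
  refine locallyFinite_Icc_intCast_add_one.continuous (iUnion_Icc_intCast ℝ)
    (fun _ => isClosed_Icc) fun m => ?_
  have hmaps : MapsTo (fun x : ℝ => x - m) (Icc (m : ℝ) (m + 1)) (Icc 0 1) :=
    fun x hx => ⟨sub_nonneg.2 hx.1, by linarith [hx.2]⟩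
  exact (continuousOn_const.mul (hg.comp (continuous_sub_right _).continuousOn hmaps)).congr
    fun x hx => mul_comp_fract_eq_of_mem_Icc h hg₀ hg₁ hx

end MulCompFract

def dyadicSubring : Subring ℝ where
  carrier := {x | IsDyadic x}
  zero_mem' := ⟨0, 0, by simp⟩
  one_mem' := ⟨1, 0, by simp⟩
  neg_mem' := by
    rintro _ ⟨m, n, rfl⟩
    exact ⟨-m, n, by push_cast; ring⟩
  add_mem' := by
    rintro _ _ ⟨m₁, n₁, rfl⟩ ⟨m₂, n₂, rfl⟩
    refine ⟨m₁ * 2 ^ n₂ + m₂ * 2 ^ n₁, n₁ + n₂, ?_⟩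
    push_cast
    field_simp
    ring
  mul_mem' := by
    rintro _ _ ⟨m₁, n₁, rfl⟩ ⟨m₂, n₂, rfl⟩
    refine ⟨m₁ * m₂, n₁ + n₂, ?_⟩
    push_cast
    field_simp
    ring

theorem isDyadic_two_zpow (n : ℤ) : IsDyadic ((2 : ℝ) ^ n) := by
  obtain ⟨k, rfl | rfl⟩ := Int.eq_nat_or_neg n
  · exact ⟨2 ^ k, 0, by simp⟩
  · exact ⟨1, k, by simp [zpow_neg]⟩

theorem IsDyadic.min {x y : ℝ} (hx : IsDyadic x) (hy : IsDyadic y) : IsDyadic (min x y) := by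
  rcases min_choice x y with h | h <;> rwa [h]

noncomputable def tent (t : ℝ) : ℝ := 2 * min t (1 - t)

theorem tent_of_le_half {t : ℝ} (ht : t ≤ 1 / 2) : tent t = 2 * t := by
  rw [tent, min_eq_left (by linarith)]

theorem tent_of_half_le {t : ℝ} (ht : 1 / 2 ≤ t) : tent t = 2 * (1 - t) := by
  rw [tent, min_eq_right (by linarith)]

theorem tent_zero : tent 0 = 0 := by norm_num [tent]

theorem tent_one : tent 1 = 0 := by norm_num [tent]

theorem continuous_tent : Continuous tent := by
  unfold tent
  fun_prop

theorem IsDyadic.tent {t : ℝ} (ht : IsDyadic t) : IsDyadic (tent t) :=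
  dyadicSubring.mul_mem (intCast_mem dyadicSubring 2)
    (ht.min (dyadicSubring.sub_mem dyadicSubring.one_mem ht))

theorem interp_of_sub_eq_half {a b fa fb : ℝ} (hab : b - a = 1 / 2) (x : ℝ) :
    interp a b fa fb x = fa + 2 * (x - a) * (fb - fa) := by
  rw [interp, hab]
  ring

theorem SpecFF.apply_natCast_add_one {F : ℝ → ℝ} (hF : SpecFF F) (j : ℕ) :
    F (j + 1) = 0 := by
  exact_mod_cast hF.1 (j + 1)

theorem SpecFF.eqOn_Ici {F G : ℝ → ℝ} (hF : SpecFF F) (hG : SpecFF G) :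
    EqOn F G (Ici 0) := by
  intro x (hx : 0 ≤ x)
  set j := ⌊x⌋₊
  have hjx : (j : ℝ) ≤ x := Nat.floor_le hx
  have hxj : x ≤ j + 1 := (Nat.lt_floor_add_one x).le
  rcases le_total x (j + 1 / 2) with hhalf | hhalf
  · rw [hF.2.2.1 j x ⟨hjx, hhalf⟩, hG.2.2.1 j x ⟨hjx, hhalf⟩, hF.1, hG.1, hF.2.1, hG.2.1]
  · rw [hF.2.2.2 j x ⟨hhalf, hxj⟩, hG.2.2.2 j x ⟨hhalf, hxj⟩, hF.2.1, hG.2.1,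
      hF.apply_natCast_add_one, hG.apply_natCast_add_one]

noncomputable def tentHeight (j : ℕ) : ℝ := 1 / 2 + (2 : ℝ) ^ (-(2 ^ kmin j : ℤ))

noncomputable def tentChain (x : ℝ) : ℝ := tentHeight ⌊x⌋.toNat * tent (Int.fract x)

theorem tentChain_eq_of_mem_Icc {j : ℕ} {x : ℝ} (hx : x ∈ Icc (j : ℝ) (j + 1)) :
    tentChain x = tentHeight j * tent (x - j) := by
  have := mul_comp_fract_eq_of_mem_Icc (fun m : ℤ => tentHeight m.toNat)
    tent_zero tent_one (m := j) (by exact_mod_cast hx)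
  simpa [tentChain] using this

theorem tentChain_natCast (j : ℕ) : tentChain j = 0 := by
  rw [tentChain_eq_of_mem_Icc ⟨le_rfl, by linarith⟩, sub_self, tent_of_le_half (by norm_num),
    mul_zero, mul_zero]

theorem tentChain_natCast_add_half (j : ℕ) : tentChain (j + 1 / 2) = tentHeight j := by
  rw [tentChain_eq_of_mem_Icc (j := j) ⟨by linarith, by linarith⟩, add_sub_cancel_left,
    tent_of_le_half le_rfl]
  ring

theorem specFF_tentChain : SpecFF tentChain := by
  have hnext (j : ℕ) : tentChain (j + 1) = 0 := by exact_mod_cast tentChain_natCast (j + 1)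
  refine ⟨tentChain_natCast, tentChain_natCast_add_half, ?_, ?_⟩
  · rintro j x ⟨hjx, hxj⟩
    rw [interp_of_sub_eq_half (by ring), tentChain_natCast, tentChain_natCast_add_half,
      tentChain_eq_of_mem_Icc ⟨hjx, by linarith⟩, tent_of_le_half (by linarith)]
    ring
  · rintro j x ⟨hjx, hxj⟩
    rw [interp_of_sub_eq_half (by ring), tentChain_natCast_add_half, hnext,
      tentChain_eq_of_mem_Icc ⟨by linarith, hxj⟩, tent_of_half_le (by linarith)]
    ring

theorem continuous_tentChain : Continuous tentChain :=
  continuous_mul_comp_fract (fun m => tentHeight m.toNat) continuous_tent.continuousOn tent_zero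
    tent_one

theorem IsDyadic.tentChain {x : ℝ} (hx : IsDyadic x) : IsDyadic (tentChain x) := by
  have hfract : IsDyadic (Int.fract x) := dyadicSubring.sub_mem hx (intCast_mem dyadicSubring _)
  have hheight : IsDyadic (tentHeight ⌊x⌋.toNat) :=
    dyadicSubring.add_mem ⟨1, 1, by norm_num⟩ (isDyadic_two_zpow _)
  exact dyadicSubring.mul_mem hheight hfract.tent

/-- `F` is well defined (a function satisfying the specification exists and is
uniquely determined on `[0,∞)`), continuous on `[0,∞)`, and maps every dyadic rational in
`[0,∞)` to a dyadic rational. -/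
theorem statement10 :
    ∃ F : ℝ → ℝ, SpecFF F ∧
      (∀ G : ℝ → ℝ, SpecFF G → Set.EqOn F G (Set.Ici 0)) ∧
      ContinuousOn F (Set.Ici 0) ∧
      (∀ x : ℝ, 0 ≤ x → IsDyadic x → IsDyadic (F x)) :=
  ⟨tentChain, specFF_tentChain, fun _ hG => specFF_tentChain.eqOn_Ici hG,
    continuous_tentChain.continuousOn, fun _ _ hx => hx.tentChain⟩
end
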